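/- (Proposition 2.3, first part.) Let a, b, c ∈ ℂ with b² ≠ 4. Then there exists x ∈ ℂ with x⁴ + bx² + 1 = 0 and H_F(x,0,1) = 0 (i.e. a flex point of C_{a,b,c} lies on the line y = 0) if and only if a² + c² − abc = 0. -/

import Mathlib

/-- The Kuribayashi quartic `F(x,y,z) = x⁴+y⁴+z⁴+a x²y² + b x²z² + c y²z²`. -/
noncomputable def F (a b c x y z : ℂ) : ℂ :=
  x ^ 4 + y ^ 4 + z ^ 4 + a * x ^ 2 * y ^ 2 + b * x ^ 2 * z ^ 2 + c * y ^ 2 * z ^ 2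

/-- The Hessian determinant of the Kuribayashi quartic: the determinant of the
3×3 matrix of second partial derivatives of `F`. -/
noncomputable def HF (a b c x y z : ℂ) : ℂ :=
  Matrix.det
    !![12 * x ^ 2 + 2 * a * y ^ 2 + 2 * b * z ^ 2, 4 * a * x * y, 4 * b * x * z;
       4 * a * x * y, 12 * y ^ 2 + 2 * a * x ^ 2 + 2 * c * z ^ 2, 4 * c * y * z;
       4 * b * x * z, 4 * c * y * z, 12 * z ^ 2 + 2 * b * x ^ 2 + 2 * c * y ^ 2]

/-!
With `t = x²`, the points of the quartic on the line `y = 0` are the roots of `t² + b t + 1`.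
There the Hessian factors as `24 (a t + c) · 3 (4 - b²) t`, and the second factor does not
vanish when `b² ≠ 4`. So a flex lies on `y = 0` iff `t² + b t + 1` and `a t + c` have a common
root, i.e. iff their resultant `a² - a b c + c²` vanishes.
-/

section AlgClosed

variable {K : Type*} [Field K] [IsAlgClosed K]

theorem exists_sq_iff_exists (P : K → Prop) : (∃ x, P (x ^ 2)) ↔ ∃ t, P t :=
  ⟨fun ⟨x, hx⟩ => ⟨x ^ 2, hx⟩, fun ⟨t, ht⟩ =>
    let ⟨x, hx⟩ := IsAlgClosed.exists_pow_nat_eq t two_pos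
    ⟨x, hx ▸ ht⟩⟩

theorem exists_sq_add_mul_add_one_eq_zero (b : K) : ∃ t : K, t ^ 2 + b * t + 1 = 0 := by
  open Polynomial in
  obtain ⟨t, ht⟩ := IsAlgClosed.exists_root (C 1 * X ^ 2 + C b * X + C 1)
    (by rw [degree_quadratic one_ne_zero]; decide)
  exact ⟨t, by simpa using ht⟩

theorem exists_common_root_iff (a b c : K) :
    (∃ t : K, t ^ 2 + b * t + 1 = 0 ∧ a * t + c = 0) ↔ a ^ 2 + c ^ 2 - a * b * c = 0 := by
  refine ⟨fun ⟨t, hq, hl⟩ => by linear_combination a ^ 2 * hq - (a * t - c + a * b) * hl,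
    fun h => ?_⟩
  by_cases ha : a = 0
  · obtain rfl : c = 0 := by subst ha; simpa using h
    obtain ⟨t, ht⟩ := exists_sq_add_mul_add_one_eq_zero b
    exact ⟨t, ht, by simp [ha]⟩
  · refine ⟨-c / a, ?_, by field_simp; ring⟩
    field_simp
    linear_combination h

end AlgClosed

theorem HF_x_zero_one (a b c x : ℂ) :
    HF a b c x 0 1 =
      24 * (a * x ^ 2 + c) * (2 * b * (x ^ 4 + b * x ^ 2 + 1) + 3 * (4 - b ^ 2) * x ^ 2) := by
  simp only [HF, Matrix.det_fin_three, Matrix.of_apply, Matrix.cons_val', Matrix.cons_val_zero,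
    Matrix.cons_val_one, Matrix.cons_val, Matrix.cons_val_fin_one]
  ring

theorem HF_x_zero_one_eq_zero_iff {a b c x : ℂ} (hb : b ^ 2 ≠ 4)
    (hx : x ^ 4 + b * x ^ 2 + 1 = 0) : HF a b c x 0 1 = 0 ↔ a * x ^ 2 + c = 0 := by
  have hx0 : x ≠ 0 := by rintro rfl; norm_num at hx
  have hb' : (4 : ℂ) - b ^ 2 ≠ 0 := sub_ne_zero.mpr hb.symm
  rw [HF_x_zero_one, hx]
  simp [hb', hx0]

/-- Proposition 2.3, first part: a flex point of `C_{a,b,c}` lies on the line `y = 0`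
iff `a² + c² − abc = 0`. -/
theorem flex_on_y_eq_zero_iff (a b c : ℂ) (hb : b ^ 2 ≠ 4) :
    (∃ x : ℂ, x ^ 4 + b * x ^ 2 + 1 = 0 ∧ HF a b c x 0 1 = 0) ↔
      a ^ 2 + c ^ 2 - a * b * c = 0 := by
  calc (∃ x : ℂ, x ^ 4 + b * x ^ 2 + 1 = 0 ∧ HF a b c x 0 1 = 0)
      ↔ ∃ x : ℂ, (x ^ 2) ^ 2 + b * x ^ 2 + 1 = 0 ∧ a * x ^ 2 + c = 0 :=
        exists_congr fun x => by
          rw [← pow_mul]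
          exact and_congr_right (HF_x_zero_one_eq_zero_iff hb)
    _ ↔ ∃ t : ℂ, t ^ 2 + b * t + 1 = 0 ∧ a * t + c = 0 :=
        exists_sq_iff_exists fun t => t ^ 2 + b * t + 1 = 0 ∧ a * t + c = 0
    _ ↔ a ^ 2 + c ^ 2 - a * b * c = 0 := exists_common_root_iff a b c
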